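/- Let X_1, X_2, … be i.i.d. real-valued random variables on a probability space (Ω, 𝓕, P) such that for P-almost every ω one has lim_{c→∞} sup_{n∈ℕ} n^{-1} ∑_{i=1}^{n} |X_i(ω)| · 1_{[c,∞)}(|X_i(ω)|) = 0. Then X_1 is integrable, i.e. E[|X_1|] < ∞. -/

import Mathlib

open MeasureTheory ProbabilityTheory Filter Finset Topology

/-!
Since `min |x| m ≤ c + |x| 1_{[c,∞)}(|x|)` for `c ≥ 0`, the hypothesis at a single good `ω`
gives a `c` such that every empirical mean of the truncations `min |X i| m` is at most `c + 1`.
By the strong law of large numbers these means converge to `E[min |X 0| m]`, which is therefore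
at most `c + 1` for every `m`, and monotone convergence bounds `E|X 0|` by `c + 1`.
-/

noncomputable def tailAverage (x : ℕ → ℝ) (c : ℝ) (n : ℕ) : ℝ :=
  (n : ℝ)⁻¹ * ∑ i ∈ range n, |x i| * (Set.Ici c).indicator 1 |x i|

lemma le_add_mul_indicator_Ici {a c : ℝ} (hc : 0 ≤ c) :
    a ≤ c + a * (Set.Ici c).indicator 1 a := by
  by_cases h : c ≤ a
  · simp [Set.indicator_of_mem (Set.mem_Ici.2 h), hc]
  · simp [Set.indicator_of_notMem (mt Set.mem_Ici.1 h)]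
    linarith

lemma sum_min_abs_div_le_add_tailAverage {x : ℕ → ℝ} {c : ℝ} (hc : 0 ≤ c) (m : ℝ) (n : ℕ) :
    (∑ i ∈ range n, min |x i| m) / n ≤ c + tailAverage x c n := by
  rcases Nat.eq_zero_or_pos n with rfl | hn
  · simpa [tailAverage] using hc
  calc (∑ i ∈ range n, min |x i| m) / n
      ≤ (∑ i ∈ range n, (c + |x i| * (Set.Ici c).indicator 1 |x i|)) / n := by
        gcongr with i
        exact (min_le_left _ _).trans (le_add_mul_indicator_Ici hc)
    _ = c + tailAverage x c n := by
        rw [sum_add_distrib, sum_const, card_range, nsmul_eq_mul, tailAverage]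
        field_simp

lemma exists_forall_tailAverage_le {x : ℕ → ℝ}
    (h : Tendsto (fun c => ⨆ n, ENNReal.ofReal (tailAverage x c n)) atTop (𝓝 0))
    {ε : ℝ} (hε : 0 < ε) : ∃ c, 0 ≤ c ∧ ∀ n, tailAverage x c n ≤ ε := by
  obtain ⟨c, hc, hc₀⟩ :=
    ((h.eventually_lt_const (ENNReal.ofReal_pos.2 hε)).and (eventually_ge_atTop 0)).exists
  exact ⟨c, hc₀, fun n => ((ENNReal.ofReal_lt_ofReal_iff hε).1 ((le_iSup _ n).trans_lt hc)).le⟩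

section Truncation

variable {Ω : Type*} [MeasurableSpace Ω] {P : Measure Ω}

lemma integrable_min_abs_const [IsFiniteMeasure P] {f : Ω → ℝ} (hf : AEStronglyMeasurable f P)
    (m : ℝ) : Integrable (fun ω => min |f ω| m) P := by
  refine Integrable.of_bound (hf.norm.inf aestronglyMeasurable_const) |m| (ae_of_all _ fun ω => ?_)
  rw [Real.norm_eq_abs, abs_le]
  exact ⟨le_min ((neg_nonpos.2 (abs_nonneg m)).trans (abs_nonneg _)) (neg_abs_le m),
    (min_le_right _ _).trans (le_abs_self m)⟩

lemma ae_forall_tendsto_sum_min_abs_div [IsFiniteMeasure P] {X : ℕ → Ω → ℝ}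
    (hindep : Pairwise fun i j => IndepFun (X i) (X j) P)
    (hident : ∀ i, IdentDistrib (X i) (X 0) P P) :
    ∀ᵐ ω ∂P, ∀ m : ℕ, Tendsto (fun n : ℕ => (∑ i ∈ range n, min |X i ω| m) / n) atTop
      (𝓝 (P[fun ω => min |X 0 ω| m])) := by
  refine ae_all_iff.2 fun m => ?_
  have hφ : Measurable fun x : ℝ => min |x| m := measurable_abs.min measurable_const
  refine strong_law_ae_real (fun i ω => min |X i ω| m) ?_
    (fun i j hij => (hindep hij).comp hφ hφ) (fun i => (hident i).comp hφ)
  exact integrable_min_abs_const (hident 0).aemeasurable_fst.aestronglyMeasurable m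

lemma integrable_of_forall_integral_min_abs_le [IsFiniteMeasure P] {f : Ω → ℝ}
    (hf : AEStronglyMeasurable f P) {C : ℝ} (hC : ∀ m : ℕ, ∫ ω, min |f ω| m ∂P ≤ C) :
    Integrable f P := by
  have h_mono : Monotone fun (m : ℕ) ω => ENNReal.ofReal (min |f ω| m) := fun a b hab ω =>
    ENNReal.ofReal_le_ofReal (min_le_min le_rfl (Nat.cast_le.2 hab))
  have h_sup : ∀ ω, ‖f ω‖ₑ = ⨆ m : ℕ, ENNReal.ofReal (min |f ω| m) := fun ω => by
    refine le_antisymm ?_ (iSup_le fun m => ?_)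
    · obtain ⟨m, hm⟩ := exists_nat_ge |f ω|
      exact le_iSup_of_le m (by rw [min_eq_left hm, Real.enorm_eq_ofReal_abs])
    · exact Real.enorm_eq_ofReal_abs _ ▸ ENNReal.ofReal_le_ofReal (min_le_left _ _)
  refine ⟨hf, ?_⟩
  calc ∫⁻ ω, ‖f ω‖ₑ ∂P = ⨆ m : ℕ, ∫⁻ ω, ENNReal.ofReal (min |f ω| m) ∂P := by
        simp_rw [h_sup]
        exact lintegral_iSup' (fun m => (integrable_min_abs_const hf m).aemeasurable.ennreal_ofReal)
          (ae_of_all _ fun ω a b hab => h_mono hab ω)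
    _ = ⨆ m : ℕ, ENNReal.ofReal (∫ ω, min |f ω| m ∂P) := by
        refine iSup_congr fun m => ?_
        exact (ofReal_integral_eq_lintegral_ofReal (integrable_min_abs_const hf m)
          (ae_of_all _ fun ω => le_min (abs_nonneg _) m.cast_nonneg)).symm
    _ ≤ ENNReal.ofReal C := iSup_le fun m => ENNReal.ofReal_le_ofReal (hC m)
    _ < ⊤ := ENNReal.ofReal_lt_top

end Truncation

theorem integrable_of_uniform_integrability_of_iid_general
    {Ω : Type*} [MeasurableSpace Ω] (P : Measure Ω) [IsProbabilityMeasure P]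
    (X : ℕ → Ω → ℝ)
    (hindep : iIndepFun X P)
    (hident : ∀ i, IdentDistrib (X i) (X 0) P P)
    (hUI : ∀ᵐ ω ∂P, Tendsto
      (fun c : ℝ => ⨆ n : ℕ, ENNReal.ofReal
        ((n : ℝ)⁻¹ * ∑ i ∈ range n,
          |X i ω| * Set.indicator (Set.Ici c) 1 |X i ω|))
      atTop (nhds 0)) :
    Integrable (X 0) P := by
  obtain ⟨ω, hω, hSLLN⟩ :=
    (hUI.and (ae_forall_tendsto_sum_min_abs_div (fun _ _ hij => hindep.indepFun hij) hident)).exists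
  obtain ⟨c, hc, htail⟩ := exists_forall_tailAverage_le (x := fun i => X i ω) hω one_pos
  refine integrable_of_forall_integral_min_abs_le
    (hident 0).aemeasurable_fst.aestronglyMeasurable (C := c + 1) fun m => ?_
  refine le_of_tendsto' (hSLLN m) fun n => ?_
  linarith [sum_min_abs_div_le_add_tailAverage (x := fun i => X i ω) hc m n, htail n]

/-- If `X 0, X 1, …` are i.i.d. real random variables such that, almost surely,
`lim_{c → ∞} sup_{n} n⁻¹ ∑_{i < n} |X i| · 1_{[c,∞)}(|X i|) = 0`,
then `X 0` is integrable. -/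
theorem integrable_of_uniform_integrability_of_iid
    {Ω : Type*} [MeasurableSpace Ω] (P : Measure Ω) [IsProbabilityMeasure P]
    (X : ℕ → Ω → ℝ) (hmeas : ∀ i, Measurable (X i))
    (hindep : iIndepFun X P)
    (hident : ∀ i, IdentDistrib (X i) (X 0) P P)
    (hUI : ∀ᵐ ω ∂P, Tendsto
      (fun c : ℝ => ⨆ n : ℕ, ENNReal.ofReal
        ((n : ℝ)⁻¹ * ∑ i ∈ range n,
          |X i ω| * Set.indicator (Set.Ici c) 1 |X i ω|))
      atTop (nhds 0)) :
    Integrable (X 0) P :=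
  integrable_of_uniform_integrability_of_iid_general P X hindep hident hUI
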